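/- The scale mixture of a centered g-dimensional normal distribution with covariance σ²τ² I_g, mixed over τ² with a Gamma((g+1)/2, λ²/2) density, yields a g-dimensional Multi-Laplace marginal density: for all θ ∈ ℝ^g, ∫₀^∞ (2πσ²τ²)^{-g/2} exp(-‖θ‖₂²/(2σ²τ²)) · (λ²/2)^{(g+1)/2} (τ²)^{(g-1)/2} / Γ((g+1)/2) · exp(-λ²τ²/2) dτ² = C_g · σ^{-g} λ^g exp(-λ‖θ‖₂/σ), where C_g = π^{(1-g)/2} 2^{-g} / Γ((g+1)/2). -/

import Mathlib

/-!
Collecting the powers of `t = τ²`, the integrand is a constant times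
`t ^ (-1/2) * exp (-a / t - b * t)` with `a = ‖θ‖² / (2σ²)` and `b = λ² / 2`. Substituting
`t = u²` and completing the square, `a / u² + b u² = (√b u - √a / u)² + 2 √(a b)`, reduces this
to a Gaussian integral through the Cauchy–Schlömilch substitution: `x = d u - c / u` maps
`(0, ∞)` onto `ℝ` with Jacobian `d + c / u²`, and for an even integrand the involution
`u ↦ c / (d u)` turns the `c / u²` part into `d` times the integral itself.
-/

open MeasureTheory Real Set

section CauchySchlomilch

variable {E : Type*} [NormedAddCommGroup E] [NormedSpace ℝ E] {c d : ℝ}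

theorem integral_div_sq_smul_comp_div_Ioi (f : ℝ → E) {k : ℝ} (hk : 0 < k) :
    ∫ v in Ioi 0, (k / v ^ 2) • f (k / v) = ∫ u in Ioi 0, f u := by
  have himage : (fun v : ℝ => k / v) '' Ioi 0 = Ioi 0 := by
    ext u
    refine ⟨fun ⟨v, hv, hu⟩ => hu ▸ div_pos hk hv, fun hu => ⟨k / u, div_pos hk hu, ?_⟩⟩
    exact div_div_cancel₀ hk.ne'
  have hderiv : ∀ v ∈ Ioi (0 : ℝ), HasDerivWithinAt (fun v => k / v) (-(k / v ^ 2)) (Ioi 0) v :=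
    fun v hv => by
      simpa [div_eq_mul_inv] using ((hasDerivAt_inv (ne_of_gt hv)).const_mul k).hasDerivWithinAt
  have hinj : InjOn (fun v : ℝ => k / v) (Ioi 0) := fun x _ y _ h => by
    simpa only [div_eq_mul_inv, mul_right_inj' hk.ne', inv_inj] using h
  conv_rhs =>
    rw [← himage, integral_image_eq_integral_abs_deriv_smul measurableSet_Ioi hderiv hinj]
  refine setIntegral_congr_fun measurableSet_Ioi fun v hv => ?_
  simp only [abs_neg, abs_of_pos (div_pos hk (pow_pos (mem_Ioi.1 hv) 2))]

theorem strictMonoOn_mul_sub_div (hc : 0 ≤ c) (hd : 0 < d) :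
    StrictMonoOn (fun u : ℝ => d * u - c / u) (Ioi 0) := fun x hx y _ hxy => by
  have := div_le_div_of_nonneg_left hc hx hxy.le
  dsimp only
  nlinarith

theorem image_mul_sub_div_Ioi (hc : 0 < c) (hd : 0 < d) :
    (fun u : ℝ => d * u - c / u) '' Ioi 0 = univ := by
  refine eq_univ_of_forall fun y => ?_
  -- the positive root of `d u ^ 2 - y u - c = 0`
  set s := √(y ^ 2 + 4 * c * d)
  have hs : s ^ 2 = y ^ 2 + 4 * c * d := sq_sqrt (by positivity)
  have hys : 0 < y + s := by nlinarith [sqrt_nonneg (y ^ 2 + 4 * c * d)]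
  refine ⟨(y + s) / (2 * d), div_pos hys (by positivity), ?_⟩
  field_simp
  nlinarith

theorem hasDerivAt_mul_sub_div {u : ℝ} (hu : u ≠ 0) :
    HasDerivAt (fun u : ℝ => d * u - c / u) (d + c / u ^ 2) u := by
  simp only [div_eq_mul_inv]
  exact (((hasDerivAt_id' u).const_mul d).fun_sub ((hasDerivAt_inv hu).const_mul c)).congr_deriv
    (by ring)

theorem integral_eq_integral_Ioi_comp_mul_sub_div (f : ℝ → E) (hc : 0 < c) (hd : 0 < d) :
    ∫ x, f x = ∫ u in Ioi 0, (d + c / u ^ 2) • f (d * u - c / u) := by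
  rw [← setIntegral_univ, ← image_mul_sub_div_Ioi hc hd,
    integral_image_eq_integral_abs_deriv_smul measurableSet_Ioi
      (fun u hu => (hasDerivAt_mul_sub_div (ne_of_gt hu)).hasDerivWithinAt)
      (strictMonoOn_mul_sub_div hc.le hd).injOn]
  exact setIntegral_congr_fun measurableSet_Ioi fun u hu => by
    rw [abs_of_pos (by have : 0 < u := hu; positivity)]

theorem integrable_iff_integrableOn_Ioi_comp_mul_sub_div {f : ℝ → E} (hc : 0 < c) (hd : 0 < d) :
    Integrable f ↔ IntegrableOn (fun u => (d + c / u ^ 2) • f (d * u - c / u)) (Ioi 0) := by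
  rw [← integrableOn_univ, ← image_mul_sub_div_Ioi hc hd,
    integrableOn_image_iff_integrableOn_abs_deriv_smul measurableSet_Ioi
      (fun u hu => (hasDerivAt_mul_sub_div (ne_of_gt hu)).hasDerivWithinAt)
      (strictMonoOn_mul_sub_div hc.le hd).injOn]
  exact integrableOn_congr_fun (fun u hu => by
    rw [abs_of_pos (by have : 0 < u := hu; positivity)]) measurableSet_Ioi

theorem integrableOn_Ioi_comp_mul_sub_div {f : ℝ → E} (hf : Integrable f)
    (hc : 0 < c) (hd : 0 < d) :
    IntegrableOn (fun u => f (d * u - c / u)) (Ioi 0) := by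
  have hint := (integrable_iff_integrableOn_Ioi_comp_mul_sub_div hc hd).1 hf
  -- the Jacobian `d + c / u ^ 2` is bounded below by `d`, and dividing it out keeps measurability
  have hmeas : AEStronglyMeasurable (fun u => f (d * u - c / u)) (volume.restrict (Ioi 0)) := by
    refine ((by fun_prop : Measurable fun u : ℝ => (d + c / u ^ 2)⁻¹).aestronglyMeasurable.smul
      hint.aestronglyMeasurable).congr ?_
    filter_upwards [ae_restrict_mem measurableSet_Ioi] with u hu
    change (d + c / u ^ 2)⁻¹ • (d + c / u ^ 2) • f (d * u - c / u) = f (d * u - c / u)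
    rw [smul_smul, inv_mul_cancel₀ (by positivity), one_smul]
  refine (hint.norm.const_mul d⁻¹).mono' hmeas ?_
  filter_upwards [ae_restrict_mem measurableSet_Ioi] with u hu
  calc ‖f (d * u - c / u)‖ = d⁻¹ * (d * ‖f (d * u - c / u)‖) := by field_simp
    _ ≤ d⁻¹ * ‖(d + c / u ^ 2) • f (d * u - c / u)‖ := by
      rw [norm_smul, norm_of_nonneg (by positivity)]
      gcongr
      exact le_add_of_nonneg_right (by positivity)

theorem integral_div_sq_smul_comp_mul_sub_div_Ioi (f : ℝ → E) (hc : 0 < c) (hd : 0 < d) :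
    ∫ u in Ioi 0, (c / u ^ 2) • f (d * u - c / u) = d • ∫ u in Ioi 0, f (-(d * u - c / u)) := by
  rw [← integral_div_sq_smul_comp_div_Ioi _ (div_pos hc hd), ← integral_smul]
  refine setIntegral_congr_fun measurableSet_Ioi fun v hv => ?_
  have hv : v ≠ 0 := ne_of_gt hv
  rw [smul_smul]
  congr 2
  · field_simp
  · field_simp
    ring

/-- The Cauchy–Schlömilch substitution. -/
theorem integral_comp_mul_sub_div_Ioi {f : ℝ → E} (hf : Integrable f) (hf_even : f.Even)
    (hc : 0 < c) (hd : 0 < d) :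
    ∫ u in Ioi 0, f (d * u - c / u) = (2 * d)⁻¹ • ∫ x, f x := by
  have hint_mul : IntegrableOn (fun u => d • f (d * u - c / u)) (Ioi 0) :=
    (integrableOn_Ioi_comp_mul_sub_div hf hc hd).smul d
  have hint_div : IntegrableOn (fun u => (c / u ^ 2) • f (d * u - c / u)) (Ioi 0) :=
    (((integrable_iff_integrableOn_Ioi_comp_mul_sub_div hc hd).1 hf).sub hint_mul).congr_fun
      (fun u _ => by simp [add_smul]) measurableSet_Ioi
  rw [integral_eq_integral_Ioi_comp_mul_sub_div f hc hd]
  simp_rw [add_smul]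
  rw [integral_add hint_mul hint_div, integral_smul,
    integral_div_sq_smul_comp_mul_sub_div_Ioi f hc hd]
  simp only [hf_even _]
  rw [← add_smul, smul_smul, show (2 * d)⁻¹ * (d + d) = 1 by field_simp; ring, one_smul]

end CauchySchlomilch

theorem integral_exp_neg_sq_mul_sub_div_Ioi {c d : ℝ} (hc : 0 ≤ c) (hd : 0 < d) :
    ∫ u in Ioi 0, exp (-(d * u - c / u) ^ 2) = √π / (2 * d) := by
  rcases hc.eq_or_lt with rfl | hc
  · simp_rw [zero_div, sub_zero, mul_pow, ← neg_mul]
    rw [integral_gaussian_Ioi, sqrt_div pi_pos.le, sqrt_sq hd.le, div_div, mul_comm d]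
  · have hgauss : ∫ x, exp (-x ^ 2) = √π := by simpa using integral_gaussian 1
    rw [integral_comp_mul_sub_div_Ioi (f := fun x => exp (-x ^ 2))
      (by simpa using integrable_exp_neg_mul_sq one_pos) (fun x => by simp) hc hd,
      hgauss, smul_eq_mul, inv_mul_eq_div]

theorem integral_rpow_neg_one_half_mul_exp_neg_div_sub_mul_Ioi {a b : ℝ} (ha : 0 ≤ a)
    (hb : 0 < b) :
    ∫ t in Ioi 0, t ^ (-(1 : ℝ) / 2) * exp (-a / t - b * t) = √(π / b) * exp (-2 * √(a * b)) := by
  have hsubst : ∀ x ∈ Ioi (0 : ℝ), ((2 : ℝ) * x ^ ((2 : ℝ) - 1)) •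
      ((x ^ (2 : ℝ)) ^ (-(1 : ℝ) / 2) * exp (-a / x ^ (2 : ℝ) - b * x ^ (2 : ℝ)))
        = 2 * exp (-2 * √(a * b)) * exp (-(√b * x - √a / x) ^ 2) := by
    intro x hx
    have hx : 0 < x := hx
    have hinv : (x ^ (2 : ℝ)) ^ (-(1 : ℝ) / 2) = x⁻¹ := by
      rw [← rpow_mul hx.le]
      norm_num [rpow_neg_one]
    rw [hinv, rpow_two, show (2 : ℝ) - 1 = 1 by norm_num, rpow_one, smul_eq_mul,
      mul_assoc 2 x, mul_inv_cancel_left₀ hx.ne', mul_assoc, ← exp_add, sqrt_mul ha, sub_sq,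
      mul_pow, div_pow, sq_sqrt ha, sq_sqrt hb.le]
    congr 2
    field_simp
    ring
  rw [← integral_comp_rpow_Ioi_of_pos (g := fun t => t ^ (-(1 : ℝ) / 2) * exp (-a / t - b * t))
    two_pos, setIntegral_congr_fun measurableSet_Ioi hsubst, integral_const_mul,
    integral_exp_neg_sq_mul_sub_div_Ioi (sqrt_nonneg a) (sqrt_pos.2 hb), sqrt_div pi_pos.le]
  field_simp

theorem gaussian_gamma_mixture_const_eq (x : ℝ) {σ lam : ℝ} (hσ : 0 < σ) (hlam : 0 < lam) :
    (2 * π * σ ^ 2) ^ (-x / 2) * (lam ^ 2 / 2) ^ ((x + 1) / 2) * √(π / (lam ^ 2 / 2))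
      = π ^ ((1 - x) / 2) * (2 : ℝ) ^ (-x) * σ ^ (-x) * lam ^ x := by
  have hπ := pi_pos
  rw [rpow_def_of_pos (by positivity), rpow_def_of_pos (by positivity), sqrt_eq_rpow,
    rpow_def_of_pos (by positivity), rpow_def_of_pos hπ, rpow_def_of_pos two_pos,
    rpow_def_of_pos hσ, rpow_def_of_pos hlam, ← exp_add, ← exp_add, ← exp_add, ← exp_add,
    ← exp_add]
  congr 1
  rw [log_mul (by positivity) (by positivity), log_mul (by norm_num) hπ.ne', log_pow,
    log_div (by positivity) (by norm_num), log_pow, log_div hπ.ne' (by positivity),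
    log_div (by positivity) (by norm_num), log_pow]
  push_cast
  ring

theorem scale_mixture_multi_laplace_general
    (g : ℕ) (σ lam : ℝ) (hσ : 0 < σ) (hlam : 0 < lam)
    (θ : EuclideanSpace ℝ (Fin g)) :
    ∫ t in Set.Ioi (0 : ℝ),
        (2 * π * σ ^ 2 * t) ^ (-(g : ℝ) / 2) * Real.exp (-‖θ‖ ^ 2 / (2 * σ ^ 2 * t)) *
          ((lam ^ 2 / 2) ^ (((g : ℝ) + 1) / 2) * t ^ (((g : ℝ) - 1) / 2) /
            Real.Gamma (((g : ℝ) + 1) / 2)) * Real.exp (-(lam ^ 2) * t / 2)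
      = (π ^ ((1 - (g : ℝ)) / 2) * (2 : ℝ) ^ (-(g : ℝ)) / Real.Gamma (((g : ℝ) + 1) / 2)) *
          σ ^ (-(g : ℝ)) * lam ^ (g : ℕ) * Real.exp (-lam * ‖θ‖ / σ) := by
  have hintegrand : ∀ t ∈ Ioi (0 : ℝ),
      (2 * π * σ ^ 2 * t) ^ (-(g : ℝ) / 2) * exp (-‖θ‖ ^ 2 / (2 * σ ^ 2 * t)) *
          ((lam ^ 2 / 2) ^ (((g : ℝ) + 1) / 2) * t ^ (((g : ℝ) - 1) / 2) /
            Gamma (((g : ℝ) + 1) / 2)) * exp (-(lam ^ 2) * t / 2)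
        = (2 * π * σ ^ 2) ^ (-(g : ℝ) / 2) * (lam ^ 2 / 2) ^ (((g : ℝ) + 1) / 2) /
            Gamma (((g : ℝ) + 1) / 2) *
          (t ^ (-(1 : ℝ) / 2) * exp (-(‖θ‖ ^ 2 / (2 * σ ^ 2)) / t - lam ^ 2 / 2 * t)) := by
    intro t ht
    have ht : 0 < t := ht
    have hpow : t ^ (-(g : ℝ) / 2) * t ^ (((g : ℝ) - 1) / 2) = t ^ (-(1 : ℝ) / 2) := by
      rw [← rpow_add ht]
      ring_nf
    have hexp : exp (-‖θ‖ ^ 2 / (2 * σ ^ 2 * t)) * exp (-(lam ^ 2) * t / 2)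
        = exp (-(‖θ‖ ^ 2 / (2 * σ ^ 2)) / t - lam ^ 2 / 2 * t) := by
      rw [← exp_add]
      congr 1
      field_simp
      ring
    rw [mul_rpow (by positivity) ht.le, ← hpow, ← hexp]
    ring
  have hexponent : -2 * √(‖θ‖ ^ 2 / (2 * σ ^ 2) * (lam ^ 2 / 2)) = -lam * ‖θ‖ / σ := by
    rw [show ‖θ‖ ^ 2 / (2 * σ ^ 2) * (lam ^ 2 / 2) = (lam * ‖θ‖ / (2 * σ)) ^ 2 by field_simp,
      sqrt_sq (by positivity)]
    field_simp
  rw [setIntegral_congr_fun measurableSet_Ioi hintegrand, integral_const_mul,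
    integral_rpow_neg_one_half_mul_exp_neg_div_sub_mul_Ioi (by positivity) (by positivity),
    hexponent, ← rpow_natCast lam g]
  linear_combination exp (-lam * ‖θ‖ / σ) / Gamma (((g : ℝ) + 1) / 2) *
    gaussian_gamma_mixture_const_eq (g : ℝ) hσ hlam

/-- The scale mixture of a centered `g`-dimensional normal with covariance `σ²τ² I`,
mixed over `τ²` with a `Gamma((g+1)/2, λ²/2)` density, is a Multi-Laplace density. -/
theorem scale_mixture_multi_laplace
    (g : ℕ) (hg : 1 ≤ g) (σ lam : ℝ) (hσ : 0 < σ) (hlam : 0 < lam)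
    (θ : EuclideanSpace ℝ (Fin g)) :
    ∫ t in Set.Ioi (0 : ℝ),
        (2 * π * σ ^ 2 * t) ^ (-(g : ℝ) / 2) * Real.exp (-‖θ‖ ^ 2 / (2 * σ ^ 2 * t)) *
          ((lam ^ 2 / 2) ^ (((g : ℝ) + 1) / 2) * t ^ (((g : ℝ) - 1) / 2) /
            Real.Gamma (((g : ℝ) + 1) / 2)) * Real.exp (-(lam ^ 2) * t / 2)
      = (π ^ ((1 - (g : ℝ)) / 2) * (2 : ℝ) ^ (-(g : ℝ)) / Real.Gamma (((g : ℝ) + 1) / 2)) *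
          σ ^ (-(g : ℝ)) * lam ^ (g : ℕ) * Real.exp (-lam * ‖θ‖ / σ) :=
  scale_mixture_multi_laplace_general g σ lam hσ hlam θ
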